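/- arXiv:1912.06121 — 5 statements merged into one kernel-verified Lean document; each statement's English description precedes it below -/
import Mathlib

section
/- Let (P_t)_{t≥0} be a Markov transition function on a Polish space E and B ⊆ E a subset. Suppose there exist ε > 0 and a function R : [0,∞) → [0,∞) with R(t) → 0 as t → ∞ such that for all x, y ∈ B and all t ≥ 0 there exist E-valued random variables Y, Z on a common probability space with (i) Law(Y) = P_t(y, ·), d_TV(Law(Z), P_t(x, ·)) ≤ 1 − ε, and (ii) E[d(Y, Z)] ≤ R(t). Then for every δ > 0 there exists T ≥ 0 such that for all t ≥ T and all x, y ∈ B, there exists a coupling Γ of P_t(x,·) and P_t(y,·) with Γ({(x′, y′) : d(x′, y′) ≤ δ}) ≥ ε/2. -/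
/-!
Write `λ` for the law of `Z`. The total variation bound yields, through a Hahn decomposition, a
common part `m ≤ P t x, λ` of mass at least `ε`. Feeding `m` into the conditional kernel of the law
`π` of `(Z, Y)` gives a subcoupling `Γ₀ ≤ π` with first marginal `m` and second marginal below
`P t y`; adding the normalised product of the residual marginals completes it to a coupling
`Γ ≥ Γ₀`. Once `R t < ε δ / 2`, Markov's inequality shows that `π` gives mass at most `ε / 2` to
`{d > δ}`, hence `Γ {d ≤ δ} ≥ Γ₀ {d ≤ δ} ≥ m E - ε / 2 ≥ ε / 2`.
-/

open MeasureTheory Metric Filter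
open scoped NNReal ENNReal

namespace MeasureTheory

open Set ProbabilityTheory

namespace Measure

variable {α β : Type*} [MeasurableSpace α] [MeasurableSpace β]

theorem restrict_le_restrict_of_forall_subset_le {μ ν : Measure α} {s : Set α}
    (hs : MeasurableSet s) (h : ∀ t, MeasurableSet t → t ⊆ s → μ t ≤ ν t) :
    μ.restrict s ≤ ν.restrict s :=
  le_iff.2 fun A hA => by
    simpa only [restrict_apply hA] using h _ (hA.inter hs) inter_subset_right

theorem exists_le_le_of_forall_abs_sub_le {μ ν : Measure α} [IsProbabilityMeasure μ]
    [IsProbabilityMeasure ν] {c : ℝ}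
    (h : ∀ A, MeasurableSet A → |(ν A).toReal - (μ A).toReal| ≤ 1 - c) :
    ∃ m : Measure α, m ≤ μ ∧ m ≤ ν ∧ ENNReal.ofReal c ≤ m univ := by
  obtain ⟨s, hs, hνμ, hμν⟩ := hahn_decomposition μ ν
  refine ⟨ν.restrict s + μ.restrict sᶜ, ?_, ?_, ?_⟩
  · conv_rhs => rw [← restrict_add_restrict_compl (μ := μ) hs]
    exact add_le_add (restrict_le_restrict_of_forall_subset_le hs hνμ) le_rfl
  · conv_rhs => rw [← restrict_add_restrict_compl (μ := ν) hs]
    exact add_le_add le_rfl (restrict_le_restrict_of_forall_subset_le hs.compl hμν)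
  · have hc := (abs_le.1 (h s hs)).1
    rw [add_apply, restrict_apply_univ, restrict_apply_univ]
    refine ENNReal.ofReal_le_of_le_toReal ?_
    rw [ENNReal.toReal_add (measure_ne_top _ _) (measure_ne_top _ _), prob_compl_eq_one_sub hs,
      ENNReal.toReal_sub_of_le prob_le_one ENNReal.one_ne_top, ENNReal.toReal_one]
    linarith

theorem exists_le_fst_eq_of_le_fst [StandardBorelSpace β] [Nonempty β] {π : Measure (α × β)}
    [IsFiniteMeasure π] {m : Measure α} (hm : m ≤ π.fst) : ∃ Γ ≤ π, Γ.fst = m := by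
  have : IsFiniteMeasure m := isFiniteMeasure_of_le _ hm
  refine ⟨m ⊗ₘ π.condKernel, ?_, fst_compProd _ _⟩
  calc m ⊗ₘ π.condKernel ≤ (π.fst - m) ⊗ₘ π.condKernel + m ⊗ₘ π.condKernel :=
        Measure.le_add_left le_rfl
    _ = π := by rw [← compProd_add_left, sub_add_cancel_of_le hm, disintegrate]

theorem exists_fst_snd_eq_of_measure_univ_eq {μ : Measure α} {ν : Measure β}
    [IsFiniteMeasure μ] [IsFiniteMeasure ν] (h : μ univ = ν univ) :
    ∃ Γ : Measure (α × β), Γ.fst = μ ∧ Γ.snd = ν := by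
  rcases eq_or_ne (μ univ) 0 with h0 | h0
  · refine ⟨0, ?_, ?_⟩
    · rw [fst_zero, eq_comm, ← measure_univ_eq_zero, h0]
    · rw [snd_zero, eq_comm, ← measure_univ_eq_zero, ← h, h0]
  have hinv : (μ univ)⁻¹ * μ univ = 1 := ENNReal.inv_mul_cancel h0 (measure_ne_top _ _)
  refine ⟨(μ univ)⁻¹ • μ.prod ν, ?_, ?_⟩
  · ext A hA
    rw [fst_apply hA, ← prod_univ, smul_apply, prod_prod, ← h, smul_eq_mul, mul_comm (μ A),
      ← mul_assoc, hinv, one_mul]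
  · ext A hA
    rw [snd_apply hA, ← univ_prod, smul_apply, prod_prod, smul_eq_mul, ← mul_assoc, hinv, one_mul]

theorem exists_le_fst_snd_eq_of_fst_le_of_snd_le {μ : Measure α} {ν : Measure β}
    [IsFiniteMeasure μ] [IsFiniteMeasure ν] (h : μ univ = ν univ) {Γ₀ : Measure (α × β)}
    (hμ : Γ₀.fst ≤ μ) (hν : Γ₀.snd ≤ ν) : ∃ Γ, Γ₀ ≤ Γ ∧ Γ.fst = μ ∧ Γ.snd = ν := by
  have : IsFiniteMeasure Γ₀.fst := isFiniteMeasure_of_le _ hμ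
  have : IsFiniteMeasure Γ₀.snd := isFiniteMeasure_of_le _ hν
  obtain ⟨Γ₁, hΓ₁fst, hΓ₁snd⟩ := exists_fst_snd_eq_of_measure_univ_eq (μ := μ - Γ₀.fst)
    (ν := ν - Γ₀.snd) (by rw [sub_apply .univ hμ, sub_apply .univ hν, h, fst_univ, snd_univ])
  refine ⟨Γ₀ + Γ₁, Measure.le_add_right le_rfl, ?_, ?_⟩
  · rw [fst_add, hΓ₁fst, add_comm, sub_add_cancel_of_le hμ]
  · rw [snd_add, hΓ₁snd, add_comm, sub_add_cancel_of_le hν]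

theorem exists_fst_snd_eq_measure_univ_le_add [StandardBorelSpace β] [Nonempty β]
    {μ : Measure α} {ν : Measure β} [IsFiniteMeasure μ] [IsFiniteMeasure ν] (h : μ univ = ν univ)
    {π : Measure (α × β)} [IsFiniteMeasure π] (hπ : π.snd ≤ ν) {m : Measure α} (hmμ : m ≤ μ)
    (hmπ : m ≤ π.fst) (D : Set (α × β)) :
    ∃ Γ : Measure (α × β), Γ.fst = μ ∧ Γ.snd = ν ∧ m univ ≤ Γ D + π Dᶜ := by
  obtain ⟨Γ₀, hΓ₀π, rfl⟩ := exists_le_fst_eq_of_le_fst hmπ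
  obtain ⟨Γ, hΓ₀Γ, hΓfst, hΓsnd⟩ :=
    exists_le_fst_snd_eq_of_fst_le_of_snd_le h hmμ ((map_mono hΓ₀π measurable_snd).trans hπ)
  refine ⟨Γ, hΓfst, hΓsnd, ?_⟩
  calc Γ₀.fst univ = Γ₀ univ := fst_univ
    _ ≤ Γ₀ D + Γ₀ Dᶜ := measure_univ_le_add_compl D
    _ ≤ Γ D + π Dᶜ := add_le_add (hΓ₀Γ D) (hΓ₀π Dᶜ)

end Measure

theorem map_prodMk_setOf_dist_le_compl_le_lintegral_edist_div {Ω E : Type*} [MeasurableSpace Ω]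
    [PseudoMetricSpace E] [SecondCountableTopology E] [MeasurableSpace E] [BorelSpace E]
    {μ : Measure Ω} {X₁ X₂ : Ω → E} (h₁ : Measurable X₁) (h₂ : Measurable X₂) {δ : ℝ}
    (hδ : 0 < δ) :
    μ.map (fun ω => (X₁ ω, X₂ ω)) {p | dist p.1 p.2 ≤ δ}ᶜ ≤
      (∫⁻ ω, edist (X₁ ω) (X₂ ω) ∂μ) / ENNReal.ofReal δ := by
  rw [Measure.map_apply (h₁.prodMk h₂)
    (isClosed_le continuous_dist continuous_const).measurableSet.compl]
  refine (measure_mono fun ω hω => ?_).trans (meas_ge_le_lintegral_div (h₁.edist h₂).aemeasurable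
    (ENNReal.ofReal_pos.2 hδ).ne' ENNReal.ofReal_ne_top)
  have hδω : δ < dist (X₁ ω) (X₂ ω) := by simpa using hω
  change ENNReal.ofReal δ ≤ edist (X₁ ω) (X₂ ω)
  rw [edist_dist]
  exact ENNReal.ofReal_le_ofReal hδω.le

end MeasureTheory

theorem generalized_coupling_implies_local_weak_irreducibility
    {E : Type} [MetricSpace E] [CompleteSpace E] [TopologicalSpace.SeparableSpace E]
    [MeasurableSpace E] [BorelSpace E]
    (P : ℝ → E → Measure E) (hP : ∀ t x, IsProbabilityMeasure (P t x))
    (B : Set E) (ε : ℝ) (hε : 0 < ε)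
    (R : ℝ → ℝ) (hR : Tendsto R atTop (nhds 0))
    (hcoup : ∀ x ∈ B, ∀ y ∈ B, ∀ t : ℝ, 0 ≤ t →
      ∃ (Ω : Type) (_ : MeasurableSpace Ω) (Pr : Measure Ω) (Y Z : Ω → E),
        IsProbabilityMeasure Pr ∧ Measurable Y ∧ Measurable Z ∧
        Pr.map Y = P t y ∧
        (∀ A : Set E, MeasurableSet A →
          |((Pr.map Z) A).toReal - ((P t x) A).toReal| ≤ 1 - ε) ∧
        ∫⁻ ω, edist (Y ω) (Z ω) ∂Pr ≤ ENNReal.ofReal (R t)) :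
    ∀ δ > (0 : ℝ), ∃ T : ℝ, 0 ≤ T ∧ ∀ t ≥ T, ∀ x ∈ B, ∀ y ∈ B,
      ∃ Γ : Measure (E × E), IsProbabilityMeasure Γ ∧
        Γ.fst = P t x ∧ Γ.snd = P t y ∧
        ENNReal.ofReal (ε / 2) ≤ Γ {p : E × E | dist p.1 p.2 ≤ δ} := by
  intro δ hδ
  obtain ⟨T, hT⟩ := eventually_atTop.1 (hR.eventually (gt_mem_nhds (by positivity : 0 < ε / 2 * δ)))
  refine ⟨max T 0, le_max_right _ _, fun t ht x hx y hy => ?_⟩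
  obtain ⟨Ω, _, Pr, Y, Z, _, hY, hZ, hYlaw, hZtv, hdist⟩ :=
    hcoup x hx y hy t ((le_max_right _ _).trans ht)
  have := hP t x
  have := hP t y
  have := Measure.isProbabilityMeasure_map (μ := Pr) hZ.aemeasurable
  have : Nonempty E := ⟨x⟩
  obtain ⟨m, hmμ, hmZ, hm⟩ := Measure.exists_le_le_of_forall_abs_sub_le hZtv
  have hfar : (Pr.map fun ω => (Z ω, Y ω)) {p | dist p.1 p.2 ≤ δ}ᶜ ≤ ENNReal.ofReal (ε / 2) := by
    refine (map_prodMk_setOf_dist_le_compl_le_lintegral_edist_div hZ hY hδ).trans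
      (ENNReal.div_le_of_le_mul ?_)
    simp_rw [edist_comm (Z _), ← ENNReal.ofReal_mul (by positivity : 0 ≤ ε / 2)]
    exact hdist.trans (ENNReal.ofReal_le_ofReal (hT t ((le_max_left _ _).trans ht)).le)
  obtain ⟨Γ, hΓfst, hΓsnd, hΓ⟩ := Measure.exists_fst_snd_eq_measure_univ_le_add
    (μ := P t x) (ν := P t y) (by simp) (by rw [Measure.snd_map_prodMk hZ, hYlaw]) hmμ
    (by rw [Measure.fst_map_prodMk hY]; exact hmZ) {p : E × E | dist p.1 p.2 ≤ δ}
  refine ⟨Γ, ⟨by rw [← Measure.fst_univ, hΓfst, measure_univ]⟩, hΓfst, hΓsnd, ?_⟩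
  refine ENNReal.le_of_add_le_add_right (ENNReal.ofReal_ne_top (r := ε / 2)) ?_
  calc ENNReal.ofReal (ε / 2) + ENNReal.ofReal (ε / 2) = ENNReal.ofReal ε := by
        rw [← ENNReal.ofReal_add (by positivity) (by positivity), add_halves]
    _ ≤ m Set.univ := hm
    _ ≤ _ := hΓ.trans (add_le_add le_rfl hfar)
end

section
/- Let (Z, Y) be E-valued random variables on a probability space with E[d(Z, Y)] ≤ R for some R ≥ 0, and let δ > 0 satisfy R/δ < ε/2 for some ε ∈ (0,1). Suppose also there exist random variables (X′, Z′) on another probability space with P(X′ = Z′) ≥ ε and Law(Z′) = Law(Z). Then there exist random variables (V¹, V², V³) on a common probability space with (V¹,V²) distributed as (X′,Z′) and (V²,V³) distributed as (Z,Y), and P(d(V¹, V³) ≤ δ) ≥ ε/2. -/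
/-!
Glue the two couplings along their common marginal `Law(Z') = Law(Z)`: disintegrating both over
that coordinate and taking the conditionally independent product of the two conditional kernels
gives `(V₁, V₂, V₃)` with the prescribed pair laws. On `{V₁ = V₂}` we have
`d(V₁, V₃) = d(V₂, V₃)`, and by Markov `d(V₂, V₃) > δ` has probability at most `R / δ < ε / 2`,
so `d(V₁, V₃) ≤ δ` with probability at least `ε - ε / 2`.
-/

open MeasureTheory ProbabilityTheory
open scoped ENNReal

namespace MeasureTheory.Measure

variable {α β γ : Type*} [MeasurableSpace α] [MeasurableSpace β] [MeasurableSpace γ]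

lemma map_compProd_prod_left (ρ : Measure α) [SFinite ρ] (κ : Kernel α β) (η : Kernel α γ)
    [IsSFiniteKernel κ] [IsMarkovKernel η] :
    (ρ ⊗ₘ (κ ×ₖ η)).map (fun p => (p.1, p.2.1)) = ρ ⊗ₘ κ := by
  rw [show (fun p : α × β × γ => (p.1, p.2.1)) = Prod.map id Prod.fst from rfl,
    ← compProd_map measurable_fst, ← Kernel.fst_eq, Kernel.fst_prod]

lemma map_compProd_prod_right (ρ : Measure α) [SFinite ρ] (κ : Kernel α β) (η : Kernel α γ)
    [IsMarkovKernel κ] [IsSFiniteKernel η] :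
    (ρ ⊗ₘ (κ ×ₖ η)).map (fun p => (p.1, p.2.2)) = ρ ⊗ₘ η := by
  rw [show (fun p : α × β × γ => (p.1, p.2.2)) = Prod.map id Prod.snd from rfl,
    ← compProd_map measurable_snd, ← Kernel.snd_eq, Kernel.snd_prod]

variable [StandardBorelSpace α] [Nonempty α] [StandardBorelSpace γ] [Nonempty γ]

noncomputable def glue (μ : Measure (α × β)) [IsFiniteMeasure μ] (ν : Measure (β × γ))
    [IsFiniteMeasure ν] : Measure (α × β × γ) :=
  (ν.fst ⊗ₘ ((μ.map Prod.swap).condKernel ×ₖ ν.condKernel)).map fun p => (p.2.1, p.1, p.2.2)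

variable (μ : Measure (α × β)) [IsFiniteMeasure μ] (ν : Measure (β × γ)) [IsFiniteMeasure ν]

instance [IsProbabilityMeasure ν] : IsProbabilityMeasure (μ.glue ν) :=
  isProbabilityMeasure_map (by fun_prop)

lemma map_glue_left (h : μ.snd = ν.fst) : (μ.glue ν).map (fun p => (p.1, p.2.1)) = μ := by
  have hswap : ν.fst ⊗ₘ (μ.map Prod.swap).condKernel = μ.map Prod.swap := by
    rw [← h, ← fst_map_swap, disintegrate]
  rw [glue, map_map (by fun_prop) (by fun_prop),
    show (fun p : α × β × γ => (p.1, p.2.1)) ∘ (fun p : β × α × γ => (p.2.1, p.1, p.2.2)) =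
      Prod.swap ∘ fun p => (p.1, p.2.1) from rfl,
    ← map_map measurable_swap (by fun_prop), map_compProd_prod_left, hswap,
    map_map measurable_swap measurable_swap, Prod.swap_swap_eq, map_id]

lemma map_glue_right : (μ.glue ν).map Prod.snd = ν := by
  rw [glue, map_map (by fun_prop) (by fun_prop)]
  exact (map_compProd_prod_right _ _ _).trans (disintegrate ν _)

lemma glue_preimage_left (h : μ.snd = ν.fst) {s : Set (α × β)} (hs : MeasurableSet s) :
    μ.glue ν ((fun p => (p.1, p.2.1)) ⁻¹' s) = μ s := by
  rw [← map_apply (by fun_prop) hs, map_glue_left μ ν h]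

lemma glue_preimage_right {s : Set (β × γ)} (hs : MeasurableSet s) :
    μ.glue ν (Prod.snd ⁻¹' s) = ν s := by
  rw [← map_apply measurable_snd hs, map_glue_right]

end MeasureTheory.Measure

section

variable {Ω E : Type*} [MeasurableSpace Ω] [PseudoMetricSpace E]

lemma measure_lt_dist_le_ofReal_div (μ : Measure Ω) {f g : Ω → E}
    (hfg : AEMeasurable (fun ω => edist (f ω) (g ω)) μ) {R δ : ℝ} (hδ : 0 < δ)
    (hR : ∫⁻ ω, edist (f ω) (g ω) ∂μ ≤ ENNReal.ofReal R) :
    μ {ω | δ < dist (f ω) (g ω)} ≤ ENNReal.ofReal (R / δ) := by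
  calc μ {ω | δ < dist (f ω) (g ω)} ≤ μ {ω | ENNReal.ofReal δ ≤ edist (f ω) (g ω)} :=
        measure_mono fun ω (hω : δ < dist (f ω) (g ω)) =>
          show ENNReal.ofReal δ ≤ edist (f ω) (g ω) from
            edist_dist (f ω) (g ω) ▸ ENNReal.ofReal_le_ofReal hω.le
    _ ≤ (∫⁻ ω, edist (f ω) (g ω) ∂μ) / ENNReal.ofReal δ :=
        meas_ge_le_lintegral_div hfg (by simpa using hδ) ENNReal.ofReal_ne_top
    _ ≤ ENNReal.ofReal (R / δ) := by rw [ENNReal.ofReal_div_of_pos hδ]; gcongr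

lemma le_measure_dist_le_of_add_le_measure_eq (μ : Measure Ω) {V₁ V₂ V₃ : Ω → E} {δ : ℝ}
    {a b : ℝ≥0∞} (hb : b ≠ ∞) (hmatch : a + b ≤ μ {ω | V₁ ω = V₂ ω})
    (hfar : μ {ω | δ < dist (V₂ ω) (V₃ ω)} ≤ b) :
    a ≤ μ {ω | dist (V₁ ω) (V₃ ω) ≤ δ} := by
  refine ENNReal.le_of_add_le_add_right hb (hmatch.trans ?_)
  have hcover : {ω | V₁ ω = V₂ ω} ⊆
      {ω | dist (V₁ ω) (V₃ ω) ≤ δ} ∪ {ω | δ < dist (V₂ ω) (V₃ ω)} := fun ω (hω : V₁ ω = V₂ ω) =>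
    show dist (V₁ ω) (V₃ ω) ≤ δ ∨ δ < dist (V₂ ω) (V₃ ω) from hω ▸ le_or_gt _ _
  calc μ {ω | V₁ ω = V₂ ω}
      ≤ μ {ω | dist (V₁ ω) (V₃ ω) ≤ δ} + μ {ω | δ < dist (V₂ ω) (V₃ ω)} :=
        (measure_mono hcover).trans (measure_union_le _ _)
    _ ≤ μ {ω | dist (V₁ ω) (V₃ ω) ≤ δ} + b := by gcongr

end

open Measure in
theorem glued_coupling_close_with_positive_probability_general
    {E : Type} [MetricSpace E] [CompleteSpace E] [TopologicalSpace.SeparableSpace E]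
    [MeasurableSpace E] [BorelSpace E]
    {Ω Ω' : Type} [MeasurableSpace Ω] [MeasurableSpace Ω']
    (Pr : Measure Ω) (Pr' : Measure Ω')
    [IsProbabilityMeasure Pr] [IsProbabilityMeasure Pr']
    (Z Y : Ω → E) (hZ : Measurable Z) (hY : Measurable Y)
    (X' Z' : Ω' → E) (hX' : Measurable X') (hZ' : Measurable Z')
    (R δ ε : ℝ) (hδ : 0 < δ) (hε : ε ∈ Set.Ioo (0:ℝ) 1)
    (hEd : ∫⁻ ω, edist (Z ω) (Y ω) ∂Pr ≤ ENNReal.ofReal R)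
    (hRδ : R / δ < ε / 2)
    (hmatch : ENNReal.ofReal ε ≤ Pr' {ω | X' ω = Z' ω})
    (hlaw : Pr'.map Z' = Pr.map Z) :
    ∃ (Ω'' : Type) (_ : MeasurableSpace Ω'') (P'' : Measure Ω'') (V₁ V₂ V₃ : Ω'' → E),
      IsProbabilityMeasure P'' ∧
      Measurable V₁ ∧ Measurable V₂ ∧ Measurable V₃ ∧
      P''.map (fun ω => (V₁ ω, V₂ ω)) = Pr'.map (fun ω => (X' ω, Z' ω)) ∧
      P''.map (fun ω => (V₂ ω, V₃ ω)) = Pr.map (fun ω => (Z ω, Y ω)) ∧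
      ENNReal.ofReal (ε / 2) ≤ P'' {ω | dist (V₁ ω) (V₃ ω) ≤ δ} := by
  have : Nonempty E := (nonempty_of_isProbabilityMeasure Pr).map Z
  set μ := Pr'.map fun ω => (X' ω, Z' ω)
  set ν := Pr.map fun ω => (Z ω, Y ω)
  have : IsProbabilityMeasure ν := isProbabilityMeasure_map (by fun_prop)
  have hmarg : μ.snd = ν.fst := by rw [snd_map_prodMk hX', fst_map_prodMk hY, hlaw]
  refine ⟨E × E × E, inferInstance, μ.glue ν, Prod.fst, fun p => p.2.1, fun p => p.2.2,
    inferInstance, by fun_prop, by fun_prop, by fun_prop, map_glue_left μ ν hmarg,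
    map_glue_right μ ν, ?_⟩
  have hmatched : ENNReal.ofReal (ε / 2) + ENNReal.ofReal (ε / 2) ≤ μ.glue ν {p | p.1 = p.2.1} := by
    have hdiag := measurableSet_eq_fun (measurable_fst (α := E) (β := E)) measurable_snd
    rw [← ENNReal.ofReal_add (by linarith [hε.1]) (by linarith [hε.1]), add_halves]
    exact hmatch.trans_eq ((map_apply (hX'.prodMk hZ') hdiag).symm.trans
      (glue_preimage_left μ ν hmarg hdiag).symm)
  have hfar : μ.glue ν {p | δ < dist p.2.1 p.2.2} ≤ ENNReal.ofReal (ε / 2) := by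
    have hs : MeasurableSet {q : E × E | δ < dist q.1 q.2} :=
      measurableSet_lt measurable_const (by fun_prop)
    calc μ.glue ν {p | δ < dist p.2.1 p.2.2} = Pr {ω | δ < dist (Z ω) (Y ω)} :=
          (glue_preimage_right μ ν hs).trans (map_apply (by fun_prop) hs)
      _ ≤ ENNReal.ofReal (R / δ) := measure_lt_dist_le_ofReal_div Pr (by fun_prop) hδ hEd
      _ ≤ ENNReal.ofReal (ε / 2) := ENNReal.ofReal_le_ofReal hRδ.le
  exact le_measure_dist_le_of_add_le_measure_eq _ ENNReal.ofReal_ne_top hmatched hfar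

theorem glued_coupling_close_with_positive_probability
    {E : Type} [MetricSpace E] [CompleteSpace E] [TopologicalSpace.SeparableSpace E]
    [MeasurableSpace E] [BorelSpace E]
    {Ω Ω' : Type} [MeasurableSpace Ω] [MeasurableSpace Ω']
    (Pr : Measure Ω) (Pr' : Measure Ω')
    [IsProbabilityMeasure Pr] [IsProbabilityMeasure Pr']
    (Z Y : Ω → E) (hZ : Measurable Z) (hY : Measurable Y)
    (X' Z' : Ω' → E) (hX' : Measurable X') (hZ' : Measurable Z')
    (R δ ε : ℝ) (hR : 0 ≤ R) (hδ : 0 < δ) (hε : ε ∈ Set.Ioo (0:ℝ) 1)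
    (hEd : ∫⁻ ω, edist (Z ω) (Y ω) ∂Pr ≤ ENNReal.ofReal R)
    (hRδ : R / δ < ε / 2)
    (hmatch : ENNReal.ofReal ε ≤ Pr' {ω | X' ω = Z' ω})
    (hlaw : Pr'.map Z' = Pr.map Z) :
    ∃ (Ω'' : Type) (_ : MeasurableSpace Ω'') (P'' : Measure Ω'') (V₁ V₂ V₃ : Ω'' → E),
      IsProbabilityMeasure P'' ∧
      Measurable V₁ ∧ Measurable V₂ ∧ Measurable V₃ ∧
      P''.map (fun ω => (V₁ ω, V₂ ω)) = Pr'.map (fun ω => (X' ω, Z' ω)) ∧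
      P''.map (fun ω => (V₂ ω, V₃ ω)) = Pr.map (fun ω => (Z ω, Y ω)) ∧
      ENNReal.ofReal (ε / 2) ≤ P'' {ω | dist (V₁ ω) (V₃ ω) ≤ δ} :=
  glued_coupling_close_with_positive_probability_general Pr Pr' Z Y hZ hY X' Z' hX' hZ' R δ ε hδ hε
    hEd hRδ hmatch hlaw
end

section
/- Consider the discrete-time Markov chain on the state space E = ℕ ∪ {n + ξ/n : n ∈ ℕ} ⊆ ℝ (for fixed ξ ∈ (0, 1/2)), with transition kernel: from an integer x ∈ ℕ, the chain moves to x+1 with probability 1/2 and to 1 with probability 1/2; from a shifted point x = n + ξ/n, it moves to (n+1) + ξ/(n+1) with probability 1/2 and to 1 + ξ with probability 1/2. Then the measures μ₁ = Σ_{i≥1} 2^{-i} δ_i and μ₂ = Σ_{i≥1} 2^{-i} δ_{i + ξ/i} are both invariant probability measures for this chain, and μ₁ ≠ μ₂. -/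
open MeasureTheory
open scoped ENNReal

/-!
Both measures are of the form `μ_x = ∑ᵢ 2^{-(i+1)} δ_{x i}` for a sequence `x` along which the
chain moves, jumping back to `x 0` with probability `1/2`. Such a measure satisfies
`μ_x = ½ δ_{x 0} + ½ μ_{x ∘ succ}`, which is exactly the invariance equation: the kernel sends
half of all mass to `x 0` and shifts the other half one step along `x`. The two measures differ
because `μ₁ {1} = 1/2`, while every atom `n + ξ/n` of `μ₂` exceeds `1`.
-/

lemma ENNReal.tsum_half_pow_succ : ∑' i : ℕ, (1/2 : ℝ≥0∞) ^ (i + 1) = 1 := by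
  rw [ENNReal.tsum_geometric_add_one, one_div, ENNReal.one_sub_inv_two, inv_inv,
    ENNReal.inv_mul_cancel two_ne_zero ENNReal.ofNat_ne_top]

namespace MeasureTheory.Measure

variable {α : Type*} [MeasurableSpace α]

noncomputable def halfGeometric (x : ℕ → α) : Measure α :=
  sum fun i : ℕ => (1/2 : ℝ≥0∞) ^ (i + 1) • dirac (x i)

variable (x : ℕ → α)

lemma halfGeometric_apply {A : Set α} (hA : MeasurableSet A) :
    halfGeometric x A = ∑' i, (1/2 : ℝ≥0∞) ^ (i + 1) * dirac (x i) A := by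
  simp only [halfGeometric, sum_apply _ hA, smul_apply, smul_eq_mul]

instance isProbabilityMeasure_halfGeometric : IsProbabilityMeasure (halfGeometric x) :=
  ⟨by simp only [halfGeometric_apply x MeasurableSet.univ, measure_univ, mul_one,
    ENNReal.tsum_half_pow_succ]⟩

lemma halfGeometric_apply_eq_zero_iff {A : Set α} (hA : MeasurableSet A) :
    halfGeometric x A = 0 ↔ ∀ i, x i ∉ A := by
  simp [halfGeometric_apply x hA, dirac_apply' _ hA]

lemma halfGeometric_apply_eq_half_dirac_add {A : Set α} (hA : MeasurableSet A) :
    halfGeometric x A = 1/2 * dirac (x 0) A + 1/2 * halfGeometric (fun i => x (i + 1)) A := by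
  rw [halfGeometric_apply x hA, halfGeometric_apply _ hA, tsum_eq_zero_add' ENNReal.summable,
    ← ENNReal.tsum_mul_left]
  simp only [pow_succ, zero_add, pow_zero, one_mul, mul_assoc, mul_left_comm (1/2 : ℝ≥0∞)]

lemma lintegral_halfGeometric [MeasurableSingletonClass α] (f : α → ℝ≥0∞) :
    ∫⁻ y, f y ∂halfGeometric x = ∑' i, (1/2 : ℝ≥0∞) ^ (i + 1) * f (x i) := by
  simp only [halfGeometric, lintegral_sum_measure, lintegral_smul_measure, lintegral_dirac,
    smul_eq_mul]

lemma halfGeometric_invariant [MeasurableSingletonClass α] (P : α → Measure α)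
    (hP : ∀ i, P (x i) = (1/2 : ℝ≥0∞) • dirac (x 0) + (1/2 : ℝ≥0∞) • dirac (x (i + 1)))
    {A : Set α} (hA : MeasurableSet A) :
    halfGeometric x A = ∫⁻ y, P y A ∂halfGeometric x := by
  calc halfGeometric x A
      = 1/2 * dirac (x 0) A + 1/2 * halfGeometric (fun i => x (i + 1)) A :=
        halfGeometric_apply_eq_half_dirac_add x hA
    _ = ∑' i, (1/2 : ℝ≥0∞) ^ (i + 1) * (1/2 * dirac (x 0) A + 1/2 * dirac (x (i + 1)) A) := by
        simp only [mul_add, ENNReal.tsum_add, ENNReal.tsum_mul_right, ENNReal.tsum_half_pow_succ,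
          one_mul, mul_left_comm _ (1/2 : ℝ≥0∞), ENNReal.tsum_mul_left, halfGeometric_apply _ hA]
    _ = ∫⁻ y, P y A ∂halfGeometric x := by
        simp only [lintegral_halfGeometric, hP, add_apply, smul_apply, smul_eq_mul]

end MeasureTheory.Measure

theorem two_invariant_measures_example_general
    (ξ : ℝ) (hξ : ξ ∈ Set.Ioo (0:ℝ) (1/2))
    (P : ℝ → Measure ℝ)
    (hPint : ∀ n : ℕ, 1 ≤ n →
      P n = (1/2 : ℝ≥0∞) • Measure.dirac (1 : ℝ)
            + (1/2 : ℝ≥0∞) • Measure.dirac ((n : ℝ) + 1))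
    (hPshift : ∀ n : ℕ, 1 ≤ n →
      P ((n : ℝ) + ξ / n) = (1/2 : ℝ≥0∞) • Measure.dirac (1 + ξ)
            + (1/2 : ℝ≥0∞) • Measure.dirac (((n : ℝ) + 1) + ξ / ((n : ℝ) + 1))) :
    let μ₁ : Measure ℝ :=
      Measure.sum (fun i : ℕ => ((1/2 : ℝ≥0∞) ^ (i + 1)) • Measure.dirac ((i : ℝ) + 1));
    let μ₂ : Measure ℝ :=
      Measure.sum (fun i : ℕ =>
        ((1/2 : ℝ≥0∞) ^ (i + 1)) • Measure.dirac (((i : ℝ) + 1) + ξ / ((i : ℝ) + 1)));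
    IsProbabilityMeasure μ₁ ∧ IsProbabilityMeasure μ₂ ∧
    (∀ A : Set ℝ, MeasurableSet A → μ₁ A = ∫⁻ x, P x A ∂μ₁) ∧
    (∀ A : Set ℝ, MeasurableSet A → μ₂ A = ∫⁻ x, P x A ∂μ₂) ∧
    μ₁ ≠ μ₂ := by
  intro μ₁ μ₂
  have hP₁ : ∀ i : ℕ, P ((i : ℝ) + 1) = (1/2 : ℝ≥0∞) • Measure.dirac ((0 : ℕ) + 1 : ℝ)
      + (1/2 : ℝ≥0∞) • Measure.dirac ((i + 1 : ℕ) + 1 : ℝ) := fun i => by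
    simpa using hPint (i + 1) (by omega)
  have hP₂ : ∀ i : ℕ, P ((i : ℝ) + 1 + ξ / ((i : ℝ) + 1)) =
      (1/2 : ℝ≥0∞) • Measure.dirac ((0 : ℕ) + 1 + ξ / ((0 : ℕ) + 1) : ℝ)
      + (1/2 : ℝ≥0∞) • Measure.dirac ((i + 1 : ℕ) + 1 + ξ / ((i + 1 : ℕ) + 1) : ℝ) := fun i => by
    simpa using hPshift (i + 1) (by omega)
  have hμ₁ : Measure.halfGeometric (fun i : ℕ => (i : ℝ) + 1) {1} ≠ 0 := by
    rw [Ne, Measure.halfGeometric_apply_eq_zero_iff _ (measurableSet_singleton 1)]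
    exact fun h => h 0 (by simp)
  have hμ₂ : Measure.halfGeometric (fun i : ℕ => (i : ℝ) + 1 + ξ / ((i : ℝ) + 1)) {1} = 0 := by
    rw [Measure.halfGeometric_apply_eq_zero_iff _ (measurableSet_singleton 1)]
    intro i hi
    have hshift : 0 < ξ / ((i : ℝ) + 1) := div_pos hξ.1 (by positivity)
    have hi_nonneg : (0 : ℝ) ≤ i := i.cast_nonneg
    simp only [Set.mem_singleton_iff] at hi
    linarith
  exact ⟨Measure.isProbabilityMeasure_halfGeometric _, Measure.isProbabilityMeasure_halfGeometric _,
    fun A hA => Measure.halfGeometric_invariant _ P hP₁ hA,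
    fun A hA => Measure.halfGeometric_invariant _ P hP₂ hA,
    fun h => hμ₁ ((congrArg (fun μ : Measure ℝ => μ {1}) h).trans hμ₂)⟩

theorem two_invariant_measures_example
    (ξ : ℝ) (hξ : ξ ∈ Set.Ioo (0:ℝ) (1/2))
    (P : ℝ → Measure ℝ)
    (hPprob : ∀ x, IsProbabilityMeasure (P x))
    (hPint : ∀ n : ℕ, 1 ≤ n →
      P n = (1/2 : ℝ≥0∞) • Measure.dirac (1 : ℝ)
            + (1/2 : ℝ≥0∞) • Measure.dirac ((n : ℝ) + 1))
    (hPshift : ∀ n : ℕ, 1 ≤ n →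
      P ((n : ℝ) + ξ / n) = (1/2 : ℝ≥0∞) • Measure.dirac (1 + ξ)
            + (1/2 : ℝ≥0∞) • Measure.dirac (((n : ℝ) + 1) + ξ / ((n : ℝ) + 1))) :
    let μ₁ : Measure ℝ :=
      Measure.sum (fun i : ℕ => ((1/2 : ℝ≥0∞) ^ (i + 1)) • Measure.dirac ((i : ℝ) + 1));
    let μ₂ : Measure ℝ :=
      Measure.sum (fun i : ℕ =>
        ((1/2 : ℝ≥0∞) ^ (i + 1)) • Measure.dirac (((i : ℝ) + 1) + ξ / ((i : ℝ) + 1)));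
    IsProbabilityMeasure μ₁ ∧ IsProbabilityMeasure μ₂ ∧
    (∀ A : Set ℝ, MeasurableSet A → μ₁ A = ∫⁻ x, P x A ∂μ₁) ∧
    (∀ A : Set ℝ, MeasurableSet A → μ₂ A = ∫⁻ x, P x A ∂μ₂) ∧
    μ₁ ≠ μ₂ :=
  two_invariant_measures_example_general ξ hξ P hPint hPshift
end

section
/- Let E = ℕ ∪ {n + ξ/n : n ∈ ℕ} ⊆ ℝ with ξ ∈ (0, 1/2) and the Euclidean distance. Then for any two distinct points x, y ∈ E, |x − y| ≥ ξ / ((x ∨ y)), and consequently for any bounded function φ : E → ℝ and the one-step transition operator P₁ of the chain in the previous example, |P₁φ(x) − P₁φ(y)| ≤ 2|x − y| · ((|x−1| ∨ |y−1|) + 1)/ξ · ‖φ‖_∞ for all x, y ∈ E. -/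
/-!
Every point of `E` is `n` or `n + ξ/n` with offset `ξ/n ≤ ξ ≤ 1/2`, so two points with different
integer parts are at distance at least `1 - ξ ≥ ξ`, and the two points with integer part `n` are at
distance `ξ/n`; either way the distance is at least `ξ / max x y`. Since `P₁` moves `E` into `E` and
is Markov, `|P₁φ(x) - P₁φ(y)| ≤ 2C`, and `2C ≤ 2C · |x - y| max x y / ξ` by the separation bound,
where `max |x - 1| |y - 1| + 1 = max x y` because `E ⊆ [1, ∞)`.
-/

open MeasureTheory
open scoped ENNReal

/-- The state space `E = ℕ ∪ {n + ξ/n : n ∈ ℕ}` (with `ℕ` starting at 1), as a subset of `ℝ`. -/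
def shiftedState (ξ : ℝ) : Set ℝ :=
  {x | ∃ n : ℕ, 1 ≤ n ∧ (x = n ∨ x = (n : ℝ) + ξ / n)}

section ShiftedState

variable {ξ : ℝ}

lemma natCast_mem_shiftedState {n : ℕ} (hn : 1 ≤ n) : (n : ℝ) ∈ shiftedState ξ :=
  ⟨n, hn, Or.inl rfl⟩

lemma natCast_add_div_mem_shiftedState {n : ℕ} (hn : 1 ≤ n) :
    (n : ℝ) + ξ / n ∈ shiftedState ξ :=
  ⟨n, hn, Or.inr rfl⟩

lemma one_mem_shiftedState : (1 : ℝ) ∈ shiftedState ξ := by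
  simpa using natCast_mem_shiftedState (ξ := ξ) le_rfl

lemma natCast_add_one_mem_shiftedState (n : ℕ) : (n : ℝ) + 1 ∈ shiftedState ξ := by
  exact_mod_cast natCast_mem_shiftedState (Nat.le_add_left 1 n)

lemma one_add_mem_shiftedState : 1 + ξ ∈ shiftedState ξ := by
  simpa using natCast_add_div_mem_shiftedState (ξ := ξ) le_rfl

lemma natCast_add_one_add_div_mem_shiftedState (n : ℕ) :
    ((n : ℝ) + 1) + ξ / ((n : ℝ) + 1) ∈ shiftedState ξ := by
  exact_mod_cast natCast_add_div_mem_shiftedState (ξ := ξ) (Nat.le_add_left 1 n)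

lemma one_le_of_mem_shiftedState (hξ : 0 ≤ ξ) {x : ℝ} (hx : x ∈ shiftedState ξ) : 1 ≤ x := by
  obtain ⟨n, hn, rfl | rfl⟩ := hx
  · exact_mod_cast hn
  · have : (1 : ℝ) ≤ n := by exact_mod_cast hn
    have : 0 ≤ ξ / n := by positivity
    linarith

lemma div_le_sub_of_mem_shiftedState (hξ₀ : 0 ≤ ξ) (hξ₁ : ξ ≤ 1 / 2) {x y : ℝ}
    (hx : x ∈ shiftedState ξ) (hy : y ∈ shiftedState ξ) (hlt : x < y) :
    ξ / y ≤ y - x := by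
  obtain ⟨m, hm, hxm⟩ := hx
  obtain ⟨n, hn, hyn⟩ := hy
  have hm₁ : (1 : ℝ) ≤ m := by exact_mod_cast hm
  have hn₁ : (1 : ℝ) ≤ n := by exact_mod_cast hn
  have hoff_m : ξ / m ≤ ξ := div_le_self hξ₀ hm₁
  have hoff_n : ξ / n ≤ ξ := div_le_self hξ₀ hn₁
  have hoff_m₀ : 0 ≤ ξ / m := by positivity
  have hoff_n₀ : 0 ≤ ξ / n := by positivity
  have hxm_le : x ≤ m + ξ / m := by rcases hxm with rfl | rfl <;> linarith
  have hyn_le : y ≤ n + ξ / n := by rcases hyn with rfl | rfl <;> linarith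
  have hny : (n : ℝ) ≤ y := by rcases hyn with rfl | rfl <;> linarith
  have hmx : (m : ℝ) ≤ x := by rcases hxm with rfl | rfl <;> linarith
  have hξy : ξ / y ≤ ξ / n := div_le_div_of_nonneg_left hξ₀ (by linarith) hny
  rcases lt_trichotomy m n with hmn | rfl | hnm
  · have : (m : ℝ) + 1 ≤ n := by exact_mod_cast hmn
    linarith
  · -- With equal integer parts, `x < y` forces `x = m` and `y = m + ξ/m`.
    rcases hxm with rfl | rfl <;> rcases hyn with rfl | rfl <;> linarith
  · have : (n : ℝ) + 1 ≤ m := by exact_mod_cast hnm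
    linarith

lemma div_max_le_abs_sub_of_mem_shiftedState (hξ₀ : 0 ≤ ξ) (hξ₁ : ξ ≤ 1 / 2) {x y : ℝ}
    (hx : x ∈ shiftedState ξ) (hy : y ∈ shiftedState ξ) (hxy : x ≠ y) :
    ξ / max x y ≤ |x - y| := by
  rcases hxy.lt_or_gt with h | h
  · rw [max_eq_right h.le, abs_sub_comm, abs_of_pos (sub_pos.2 h)]
    exact div_le_sub_of_mem_shiftedState hξ₀ hξ₁ hx hy h
  · rw [max_eq_left h.le, abs_of_pos (sub_pos.2 h)]
    exact div_le_sub_of_mem_shiftedState hξ₀ hξ₁ hy hx h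

end ShiftedState

lemma ae_mem_smul_dirac_add_smul_dirac {α : Type*} [MeasurableSpace α] [MeasurableSingletonClass α]
    {s : Set α} {a b : α} (ha : a ∈ s) (hb : b ∈ s) (c d : ℝ≥0∞) :
    ∀ᵐ z ∂(c • Measure.dirac a + d • Measure.dirac b), z ∈ s := by
  refine ae_add_measure_iff.2 ⟨Measure.ae_smul_measure ?_ c, Measure.ae_smul_measure ?_ d⟩
  · rw [ae_dirac_eq]; exact ha
  · rw [ae_dirac_eq]; exact hb

lemma abs_integral_le_of_ae_abs_le {α : Type*} [MeasurableSpace α] {μ : Measure α}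
    [IsProbabilityMeasure μ] {φ : α → ℝ} {C : ℝ} (h : ∀ᵐ z ∂μ, |φ z| ≤ C) :
    |∫ z, φ z ∂μ| ≤ C := by
  simpa using norm_integral_le_of_norm_le_const (μ := μ) (f := φ) (by simpa only [Real.norm_eq_abs])

lemma max_abs_sub_one_add_one {x y : ℝ} (hx : 1 ≤ x) (hy : 1 ≤ y) :
    max |x - 1| |y - 1| + 1 = max x y := by
  rw [abs_of_nonneg (sub_nonneg.2 hx), abs_of_nonneg (sub_nonneg.2 hy), max_sub_sub_right,
    sub_add_cancel]

theorem separation_and_gradient_bound_example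
    (ξ : ℝ) (hξ : ξ ∈ Set.Ioo (0:ℝ) (1/2))
    (P : ℝ → Measure ℝ)
    (hPprob : ∀ x, IsProbabilityMeasure (P x))
    (hPint : ∀ n : ℕ, 1 ≤ n →
      P n = (1/2 : ℝ≥0∞) • Measure.dirac (1 : ℝ)
            + (1/2 : ℝ≥0∞) • Measure.dirac ((n : ℝ) + 1))
    (hPshift : ∀ n : ℕ, 1 ≤ n →
      P ((n : ℝ) + ξ / n) = (1/2 : ℝ≥0∞) • Measure.dirac (1 + ξ)
            + (1/2 : ℝ≥0∞) • Measure.dirac (((n : ℝ) + 1) + ξ / ((n : ℝ) + 1)))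
    (φ : ℝ → ℝ) (C : ℝ) (hC : ∀ z ∈ shiftedState ξ, |φ z| ≤ C)
    (x y : ℝ) (hx : x ∈ shiftedState ξ) (hy : y ∈ shiftedState ξ) (hxy : x ≠ y) :
    ξ / max x y ≤ |x - y| ∧
    |(∫ z, φ z ∂(P x)) - ∫ z, φ z ∂(P y)|
      ≤ 2 * |x - y| * ((max |x - 1| |y - 1|) + 1) / ξ * C := by
  obtain ⟨hξ₀, hξ₁⟩ := hξ
  have hsep := div_max_le_abs_sub_of_mem_shiftedState hξ₀.le hξ₁.le hx hy hxy
  refine ⟨hsep, ?_⟩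
  have hP_le : ∀ z ∈ shiftedState ξ, |∫ w, φ w ∂(P z)| ≤ C := by
    rintro z ⟨n, hn, rfl | rfl⟩ <;> refine abs_integral_le_of_ae_abs_le ?_
    · rw [hPint n hn]
      exact (ae_mem_smul_dirac_add_smul_dirac one_mem_shiftedState
        (natCast_add_one_mem_shiftedState n) _ _).mono hC
    · rw [hPshift n hn]
      exact (ae_mem_smul_dirac_add_smul_dirac one_add_mem_shiftedState
        (natCast_add_one_add_div_mem_shiftedState n) _ _).mono hC
  have hC₀ : 0 ≤ C := (abs_nonneg _).trans (hC 1 one_mem_shiftedState)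
  have hM : 0 < max x y := by
    linarith [one_le_of_mem_shiftedState hξ₀.le hx, le_max_left x y]
  have hgain : 1 ≤ |x - y| * max x y / ξ := by
    rwa [le_div_iff₀ hξ₀, one_mul, ← div_le_iff₀ hM]
  rw [max_abs_sub_one_add_one (one_le_of_mem_shiftedState hξ₀.le hx)
    (one_le_of_mem_shiftedState hξ₀.le hy)]
  calc |(∫ z, φ z ∂(P x)) - ∫ z, φ z ∂(P y)|
      ≤ |∫ z, φ z ∂(P x)| + |∫ z, φ z ∂(P y)| := abs_sub _ _
    _ ≤ 2 * C := by linarith [hP_le x hx, hP_le y hy]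
    _ ≤ 2 * C * (|x - y| * max x y / ξ) := le_mul_of_one_le_right (by positivity) hgain
    _ = 2 * |x - y| * max x y / ξ * C := by ring
end

section
/- Consider the discrete-time Markov kernel on E = [0,3] defined by P₁(x, ·) = Law(2 − √x + ζ) for x ∈ [0,1] and P₁(x, ·) = Law(2/3 + x/3 + ζ) for x ∈ [1,3], where ζ is uniform on [0, 1/3]. Then for the Lipschitz function φ(z) = z and every n ≥ 1 and y ∈ [0,1], |P_n φ(0) − P_n φ(y)| = 3^{−n+1} √y. Consequently, there is no constant C such that |P_n φ(0) − P_n φ(y)| ≤ C · y for all y ∈ (0,1], for any fixed n. -/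
open MeasureTheory
open scoped ENNReal

/-- The one-step transition operator `φ ↦ (x ↦ ∫ φ dK(x,·))` of a kernel `K`. -/
noncomputable def stepOp (K : ℝ → Measure ℝ) (φ : ℝ → ℝ) (x : ℝ) : ℝ :=
  ∫ z, φ z ∂(K x)

/-!
On `[1, 3]` the kernel maps `x` to `2/3 + x/3 + ζ`, whose mean is `5/6 + x/3`; since this stays in
`[1, 3]`, the iterates of `φ = id` there are affine, `P_m φ(z) = 5/4 + (z - 5/4) / 3^m`. From
`y ∈ [0, 1]` one step lands in `[1, 3]` at mean `13/6 - √y`, so `P_{m+1} φ(y)` is affine in `√y`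
with slope `-3^{-m}`, and `√y` is not `O(y)` as `y → 0`.
-/

/-- The law of `ζ`, uniform on `[0, 1/3]`. -/
noncomputable abbrev uniformThird : Measure ℝ :=
  (3 : ℝ≥0∞) • volume.restrict (Set.Icc (0:ℝ) (1/3))

theorem integral_affine_uniformThird (a c : ℝ) :
    ∫ u, a + c * u ∂uniformThird = a + c / 6 := by
  rw [integral_smul_measure, integral_Icc_eq_integral_Ioc,
    ← intervalIntegral.integral_of_le (by norm_num), intervalIntegral.integral_add intervalIntegrable_const
      ((continuous_const_mul c).intervalIntegrable _ _),
    intervalIntegral.integral_const, intervalIntegral.integral_const_mul, integral_id]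
  norm_num
  ring

theorem ae_mem_Icc_uniformThird : ∀ᵐ u ∂uniformThird, u ∈ Set.Icc (0:ℝ) (1/3) :=
  Measure.ae_smul_measure (ae_restrict_mem measurableSet_Icc) _

theorem integral_map_add_uniformThird {f : ℝ → ℝ} {a b c : ℝ}
    (hf : Set.EqOn f (fun w => a + c * w) (Set.Icc b (b + 1/3))) :
    ∫ z, f z ∂(uniformThird.map (b + ·)) = a + c * (b + 1/6) := by
  -- `b + ·` is a measurable embedding, so `f` need not be measurable.
  rw [(measurableEmbedding_addLeft b).integral_map]
  calc ∫ u, f (b + u) ∂uniformThird = ∫ u, (a + c * b) + c * u ∂uniformThird := by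
        refine integral_congr_ae ?_
        filter_upwards [ae_mem_Icc_uniformThird] with u ⟨hu0, hu1⟩
        rw [hf ⟨by linarith, by linarith⟩]
        ring
    _ = a + c * (b + 1/6) := by rw [integral_affine_uniformThird]; ring

theorem not_exists_sqrt_le_mul {c : ℝ} (hc : 0 < c) :
    ¬ ∃ C : ℝ, ∀ y ∈ Set.Ioc (0:ℝ) 1, c * Real.sqrt y ≤ C * y := by
  rintro ⟨C, hC⟩
  have hC1 : c ≤ C := by simpa using hC 1 ⟨one_pos, le_rfl⟩
  have hCpos : 0 < C := hc.trans_le hC1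
  set t := min 1 (c / (2 * C))
  have ht0 : 0 < t := lt_min one_pos (by positivity)
  have htC : C * t ≤ c / 2 := by
    have := min_le_right 1 (c / (2 * C))
    rw [le_div_iff₀ (by positivity)] at this
    linarith
  have := hC (t ^ 2) ⟨by positivity, pow_le_one₀ ht0.le (min_le_left _ _)⟩
  rw [Real.sqrt_sq ht0.le] at this
  nlinarith

section Example

variable {K : ℝ → Measure ℝ}

theorem stepOp_iterate_id_of_mem_Icc_one_three
    (h2 : ∀ x ∈ Set.Icc (1:ℝ) 3, K x = uniformThird.map (fun u => 2/3 + x/3 + u))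
    (m : ℕ) : Set.EqOn ((stepOp K)^[m] id) (fun z => 5/4 + (z - 5/4) / 3 ^ m) (Set.Icc 1 3) := by
  induction m with
  | zero => intro z _; simp
  | succ m ih =>
    intro z ⟨hz1, hz3⟩
    rw [Function.iterate_succ_apply', stepOp, h2 z ⟨hz1, hz3⟩,
      integral_map_add_uniformThird (a := 5/4 - 5/4 / 3 ^ m) (c := 1 / 3 ^ m)]
    · field_simp
      ring
    · intro w ⟨hw1, hw3⟩
      simp only [ih ⟨by linarith, by linarith⟩]
      ring

theorem stepOp_iterate_succ_id_of_mem_Icc_zero_one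
    (h1 : ∀ x ∈ Set.Icc (0:ℝ) 1, K x = uniformThird.map (fun u => 2 - Real.sqrt x + u))
    (h2 : ∀ x ∈ Set.Icc (1:ℝ) 3, K x = uniformThird.map (fun u => 2/3 + x/3 + u))
    (m : ℕ) {y : ℝ} (hy : y ∈ Set.Icc (0:ℝ) 1) :
    (stepOp K)^[m + 1] id y = 5/4 + (11/12 - Real.sqrt y) / 3 ^ m := by
  have hsqrt0 := Real.sqrt_nonneg y
  have hsqrt1 : Real.sqrt y ≤ 1 := Real.sqrt_le_one.mpr hy.2
  rw [Function.iterate_succ_apply', stepOp, h1 y hy,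
    integral_map_add_uniformThird (a := 5/4 - 5/4 / 3 ^ m) (c := 1 / 3 ^ m)]
  · ring
  · intro w ⟨hw1, hw3⟩
    simp only [stepOp_iterate_id_of_mem_Icc_one_three h2 m
      ⟨by linarith, by linarith⟩]
    ring

theorem abs_stepOp_iterate_id_zero_sub
    (h1 : ∀ x ∈ Set.Icc (0:ℝ) 1, K x = uniformThird.map (fun u => 2 - Real.sqrt x + u))
    (h2 : ∀ x ∈ Set.Icc (1:ℝ) 3, K x = uniformThird.map (fun u => 2/3 + x/3 + u))
    {n : ℕ} (hn : 1 ≤ n) {y : ℝ} (hy : y ∈ Set.Icc (0:ℝ) 1) :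
    |(stepOp K)^[n] id 0 - (stepOp K)^[n] id y| = 3 * Real.sqrt y / 3 ^ n := by
  obtain ⟨m, rfl⟩ := Nat.exists_eq_add_of_le' hn
  rw [stepOp_iterate_succ_id_of_mem_Icc_zero_one h1 h2 m ⟨le_rfl, zero_le_one⟩,
    stepOp_iterate_succ_id_of_mem_Icc_zero_one h1 h2 m hy, Real.sqrt_zero, pow_succ,
    abs_of_nonneg (by ring_nf; positivity)]
  field_simp
  ring

end Example

theorem strong_feller_not_ASFplus_example
    (K : ℝ → Measure ℝ)
    (h1 : ∀ x ∈ Set.Icc (0:ℝ) 1,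
      K x = Measure.map (fun u => 2 - Real.sqrt x + u)
              ((3 : ℝ≥0∞) • MeasureTheory.volume.restrict (Set.Icc (0:ℝ) (1/3))))
    (h2 : ∀ x ∈ Set.Icc (1:ℝ) 3,
      K x = Measure.map (fun u => 2/3 + x/3 + u)
              ((3 : ℝ≥0∞) • MeasureTheory.volume.restrict (Set.Icc (0:ℝ) (1/3)))) :
    (∀ n : ℕ, 1 ≤ n → ∀ y ∈ Set.Icc (0:ℝ) 1,
      |(stepOp K)^[n] id 0 - (stepOp K)^[n] id y| = 3 * Real.sqrt y / 3 ^ n) ∧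
    (∀ n : ℕ, 1 ≤ n →
      ¬ ∃ C : ℝ, ∀ y ∈ Set.Ioc (0:ℝ) 1,
        |(stepOp K)^[n] id 0 - (stepOp K)^[n] id y| ≤ C * y) := by
  refine ⟨fun n hn y hy => abs_stepOp_iterate_id_zero_sub h1 h2 hn hy, fun n hn ⟨C, hC⟩ =>
    not_exists_sqrt_le_mul (c := 3 / 3 ^ n) (by positivity) ⟨C, fun y hy => ?_⟩⟩
  rw [div_mul_eq_mul_div, ← abs_stepOp_iterate_id_zero_sub h1 h2 hn (Set.Ioc_subset_Icc_self hy)]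
  exact hC y hy
end
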